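/- Let β < 0, let f be an admissible function on ℝ² with ∫_{ℝ²} f dx = M > 0, and for y ∈ ℝ² set f_y(x) = f(x+y). Then lim_{|y|→∞} F⁻_β[f_y] = −∞ and lim_{|y|→∞} F⁺_β[f_y] = −∞; in particular, for β < 0 neither F⁺_β nor F⁻_β is bounded from below on the set of admissible functions of mass M. -/

import Mathlib

open MeasureTheory Real Filter

noncomputable section

/-- The Euclidean plane ℝ². -/
abbrev E2 := EuclideanSpace ℝ (Fin 2)

/-- The probability density μ(x) = 1/(π (1+|x|²)²) on ℝ². -/
def mu2 (x : E2) : ℝ := 1 / (π * (1 + ‖x‖ ^ 2) ^ 2)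

/-- The external potential V(x) = −log μ(x) = 2 log(1+|x|²) + log π. -/
def Vpot (x : E2) : ℝ := 2 * Real.log (1 + ‖x‖ ^ 2) + Real.log π

/-- A function f on ℝ² is admissible if it is measurable, nonnegative a.e., integrable,
and ∫ f |log f|, ∫ V f and ∬ f(x) f(y) |log|x−y|| are all finite. -/
def Admissible (f : E2 → ℝ) : Prop :=
  Measurable f ∧ (∀ᵐ x : E2, 0 ≤ f x) ∧ Integrable f ∧
  Integrable (fun x => f x * |Real.log (f x)|) ∧
  Integrable (fun x => Vpot x * f x) ∧
  Integrable (fun p : E2 × E2 => f p.1 * f p.2 * |Real.log ‖p.1 - p.2‖|)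

/-- The repulsive free energy F⁺_β. -/
def Fplus (β : ℝ) (f : E2 → ℝ) : ℝ :=
  (∫ x, f x * Real.log (f x)) + β * (∫ x, Vpot x * f x)
    - (1 / (4 * π)) * ∫ p : E2 × E2, f p.1 * f p.2 * Real.log ‖p.1 - p.2‖

/-- The attractive free energy F⁻_β. -/
def Fminus (β : ℝ) (f : E2 → ℝ) : ℝ :=
  (∫ x, f x * Real.log (f x)) + β * (∫ x, Vpot x * f x)
    + (1 / (4 * π)) * ∫ p : E2 × E2, f p.1 * f p.2 * Real.log ‖p.1 - p.2‖

/-!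
Translating `f` leaves the entropy and the logarithmic interaction unchanged, so `F^±_β[f_y]`
differs from `F^±_β[f]` only through `β ∫ V(x - y) f(x) dx`. Since `V` is nonnegative and
confining and `f` has positive mass on some ball, this potential energy tends to `+∞` as
`|y| → ∞`; as `β < 0`, both free energies tend to `-∞`. The translates are admissible with
mass `M`, so neither functional is bounded below on that class.
-/

lemma one_add_norm_sub_sq_le {G : Type*} [SeminormedAddCommGroup G] (x y : G) :
    1 + ‖x - y‖ ^ 2 ≤ 2 * ((1 + ‖x‖ ^ 2) * (1 + ‖y‖ ^ 2)) := by
  have hxy : ‖x - y‖ ^ 2 ≤ (‖x‖ + ‖y‖) ^ 2 := by gcongr; exact norm_sub_le x y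
  nlinarith [sq_nonneg (‖x‖ - ‖y‖), sq_nonneg (‖x‖ * ‖y‖)]

lemma vpot_nonneg (x : E2) : 0 ≤ Vpot x := by
  have h1 : 0 ≤ Real.log (1 + ‖x‖ ^ 2) := Real.log_nonneg (by nlinarith [sq_nonneg ‖x‖])
  have h2 : 0 ≤ Real.log π := Real.log_nonneg (by linarith [Real.pi_gt_three])
  unfold Vpot; linarith

lemma measurable_vpot : Measurable Vpot := by
  unfold Vpot; fun_prop

lemma vpot_sub_le (x y : E2) :
    Vpot (x - y) ≤ Vpot x + 2 * Real.log 2 + 2 * Real.log (1 + ‖y‖ ^ 2) := by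
  have hlog : Real.log (1 + ‖x - y‖ ^ 2) ≤
      Real.log 2 + Real.log (1 + ‖x‖ ^ 2) + Real.log (1 + ‖y‖ ^ 2) := by
    calc Real.log (1 + ‖x - y‖ ^ 2)
        ≤ Real.log (2 * ((1 + ‖x‖ ^ 2) * (1 + ‖y‖ ^ 2))) :=
          Real.log_le_log (by positivity) (one_add_norm_sub_sq_le x y)
      _ = Real.log 2 + Real.log (1 + ‖x‖ ^ 2) + Real.log (1 + ‖y‖ ^ 2) := by
          rw [Real.log_mul (by norm_num) (by positivity),
            Real.log_mul (by positivity) (by positivity), add_assoc]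
  unfold Vpot; linarith

lemma tendsto_vpot : Tendsto Vpot (comap norm atTop) atTop := by
  have hlog : Tendsto (fun r : ℝ => Real.log (1 + r ^ 2)) atTop atTop :=
    Real.tendsto_log_atTop.comp (tendsto_atTop_add_const_left _ 1 (tendsto_pow_atTop two_ne_zero))
  exact (tendsto_atTop_add_const_right _ _ (hlog.const_mul_atTop two_pos)).comp tendsto_comap

lemma integrable_vpot_sub_mul {f : E2 → ℝ} (hf0 : ∀ᵐ x : E2, 0 ≤ f x) (hfi : Integrable f)
    (hfV : Integrable (fun x => Vpot x * f x)) (y : E2) :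
    Integrable (fun x => Vpot (x - y) * f x) := by
  refine (hfV.add (hfi.const_mul (2 * Real.log 2 + 2 * Real.log (1 + ‖y‖ ^ 2)))).mono'
    ((measurable_vpot.comp (measurable_sub_const y)).aestronglyMeasurable.mul
      hfi.aestronglyMeasurable) ?_
  filter_upwards [hf0] with x hx
  rw [Real.norm_of_nonneg (mul_nonneg (vpot_nonneg _) hx), Pi.add_apply]
  nlinarith [mul_le_mul_of_nonneg_right (vpot_sub_le x y) hx]

-- `Measure.prod.instIsAddRightInvariant` is not found through `volume` on a product.
instance : (volume : Measure (E2 × E2)).IsAddRightInvariant :=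
  Measure.prod.instIsAddRightInvariant

lemma integral_vpot_mul_comp_add_right (f : E2 → ℝ) (y : E2) :
    ∫ x, Vpot x * f (x + y) = ∫ x, Vpot (x - y) * f x := by
  simpa using integral_add_right_eq_self (μ := volume) (fun x => Vpot (x - y) * f x) y

lemma integral_log_dist_comp_add_right (f : E2 → ℝ) (y : E2) :
    ∫ p : E2 × E2, f (p.1 + y) * f (p.2 + y) * Real.log ‖p.1 - p.2‖
      = ∫ p : E2 × E2, f p.1 * f p.2 * Real.log ‖p.1 - p.2‖ := by
  simpa using integral_add_right_eq_self (μ := volume)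
    (fun p : E2 × E2 => f p.1 * f p.2 * Real.log ‖p.1 - p.2‖) (y, y)

lemma Admissible.comp_add_right {f : E2 → ℝ} (hf : Admissible f) (y : E2) :
    Admissible (fun x => f (x + y)) := by
  obtain ⟨hm, h0, hi, he, hV, hD⟩ := hf
  refine ⟨hm.comp (measurable_add_const y),
    (measurePreserving_add_right volume y).quasiMeasurePreserving.ae h0,
    hi.comp_add_right y, he.comp_add_right y, ?_, ?_⟩
  · simpa using (integrable_vpot_sub_mul h0 hi hV y).comp_add_right y
  · simpa using hD.comp_add_right (y, y)

lemma fminus_comp_add_right (β : ℝ) (f : E2 → ℝ) (y : E2) :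
    Fminus β (fun x => f (x + y))
      = Fminus β f - β * (∫ x, Vpot x * f x) + β * ∫ x, Vpot (x - y) * f x := by
  simp only [Fminus, integral_add_right_eq_self (fun x => f x * Real.log (f x)),
    integral_vpot_mul_comp_add_right, integral_log_dist_comp_add_right]
  ring

lemma fplus_comp_add_right (β : ℝ) (f : E2 → ℝ) (y : E2) :
    Fplus β (fun x => f (x + y))
      = Fplus β f - β * (∫ x, Vpot x * f x) + β * ∫ x, Vpot (x - y) * f x := by
  simp only [Fplus, integral_add_right_eq_self (fun x => f x * Real.log (f x)),
    integral_vpot_mul_comp_add_right, integral_log_dist_comp_add_right]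
  ring

section Confinement

variable {G : Type*} [NormedAddCommGroup G] [MeasurableSpace G] [OpensMeasurableSpace G]
  {μ : Measure G}

lemma exists_setIntegral_ball_pos {f : G → ℝ} (hfi : Integrable f μ) (hpos : 0 < ∫ x, f x ∂μ) :
    ∃ R : ℝ, 0 < ∫ x in Metric.ball 0 R, f x ∂μ := by
  have hmono : Monotone (fun n : ℕ => Metric.ball (0 : G) n) := fun a b hab =>
    Metric.ball_subset_ball (by exact_mod_cast hab)
  have hlim := tendsto_setIntegral_of_monotone (fun n : ℕ => Metric.isOpen_ball.measurableSet)
    hmono (by rw [Metric.iUnion_ball_nat]; exact hfi.integrableOn)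
  rw [Metric.iUnion_ball_nat, setIntegral_univ] at hlim
  obtain ⟨n, hn⟩ := (hlim.eventually (lt_mem_nhds hpos)).exists
  exact ⟨n, hn⟩

lemma tendsto_integral_comp_sub_mul_atTop {W f : G → ℝ} (hW0 : ∀ z, 0 ≤ W z)
    (hW : Tendsto W (comap norm atTop) atTop) (hf0 : ∀ᵐ x ∂μ, 0 ≤ f x) (hfi : Integrable f μ)
    (hpos : 0 < ∫ x, f x ∂μ)
    (hint : ∀ y, Integrable (fun x => W (x - y) * f x) μ) :
    Tendsto (fun y => ∫ x, W (x - y) * f x ∂μ) (comap norm atTop) atTop := by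
  obtain ⟨R, hR⟩ := exists_setIntegral_ball_pos hfi hpos
  set m := ∫ x in Metric.ball 0 R, f x ∂μ
  refine tendsto_atTop.2 fun B => ?_
  obtain ⟨r, -, hr⟩ := ((atTop_basis.comap norm).eventually_iff).1 (hW.eventually_ge_atTop (B / m))
  filter_upwards [tendsto_comap.eventually_ge_atTop (R + r)] with y hy
  have hfar : ∀ᵐ x ∂μ, x ∈ Metric.ball (0 : G) R → B / m * f x ≤ W (x - y) * f x := by
    filter_upwards [hf0] with x hx hxR
    have hxy : r ≤ ‖x - y‖ := by
      rw [mem_ball_zero_iff] at hxR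
      linarith [norm_sub_norm_le y x, norm_sub_rev y x]
    exact mul_le_mul_of_nonneg_right (hr hxy) hx
  calc B = ∫ x in Metric.ball 0 R, B / m * f x ∂μ := by
        rw [integral_const_mul, div_mul_cancel₀ _ hR.ne']
    _ ≤ ∫ x in Metric.ball 0 R, W (x - y) * f x ∂μ :=
        setIntegral_mono_on_ae (hfi.const_mul _).integrableOn (hint y).integrableOn
          Metric.isOpen_ball.measurableSet hfar
    _ ≤ ∫ x, W (x - y) * f x ∂μ :=
        setIntegral_le_integral (hint y) (by
          filter_upwards [hf0] with x hx using mul_nonneg (hW0 _) hx)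

end Confinement

/-- For β < 0 the free energies of translates f_y(x) = f(x+y) tend to −∞ as |y| → ∞;
in particular neither F⁺_β nor F⁻_β is bounded from below on the mass-M class. -/
theorem free_energy_translation_unbounded (β : ℝ) (hβ : β < 0)
    (f : E2 → ℝ) (hf : Admissible f) (M : ℝ) (hM : M = ∫ x, f x) (hM0 : 0 < M) :
    Tendsto (fun y : E2 => Fminus β (fun x => f (x + y)))
      (Filter.comap norm Filter.atTop) Filter.atBot ∧
    Tendsto (fun y : E2 => Fplus β (fun x => f (x + y)))
      (Filter.comap norm Filter.atTop) Filter.atBot ∧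
    (¬ ∃ C : ℝ, ∀ g : E2 → ℝ, Admissible g → (∫ x, g x) = M → C ≤ Fminus β g) ∧
    (¬ ∃ C : ℝ, ∀ g : E2 → ℝ, Admissible g → (∫ x, g x) = M → C ≤ Fplus β g) := by
  obtain ⟨-, hf0, hfi, -, hfV, -⟩ := id hf
  have hpot : Tendsto (fun y => ∫ x, Vpot (x - y) * f x) (comap norm atTop) atTop :=
    tendsto_integral_comp_sub_mul_atTop vpot_nonneg tendsto_vpot hf0 hfi (hM ▸ hM0)
      (integrable_vpot_sub_mul hf0 hfi hfV)
  have hdrift (c : ℝ) : Tendsto (fun y => c + β * ∫ x, Vpot (x - y) * f x)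
      (comap norm atTop) atBot :=
    tendsto_atBot_add_const_left _ c ((tendsto_const_mul_atBot_of_neg hβ).2 hpot)
  have hminus := hdrift (Fminus β f - β * ∫ x, Vpot x * f x)
  have hplus := hdrift (Fplus β f - β * ∫ x, Vpot x * f x)
  simp only [← fminus_comp_add_right, ← fplus_comp_add_right] at hminus hplus
  have : (comap norm atTop : Filter E2).NeBot := by rw [comap_norm_atTop]; infer_instance
  have htranslate (y : E2) : Admissible (fun x => f (x + y)) ∧ ∫ x, f (x + y) = M :=
    ⟨hf.comp_add_right y, by rw [hM, integral_add_right_eq_self f y]⟩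
  refine ⟨hminus, hplus, ?_, ?_⟩ <;> rintro ⟨C, hC⟩
  · exact not_bddBelow_of_tendsto_atBot hminus
      ⟨C, Set.forall_mem_range.2 fun y => hC _ (htranslate y).1 (htranslate y).2⟩
  · exact not_bddBelow_of_tendsto_atBot hplus
      ⟨C, Set.forall_mem_range.2 fun y => hC _ (htranslate y).1 (htranslate y).2⟩
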